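/- arXiv:2203.10728 — 4 statements merged into one kernel-verified Lean document; each statement's English description precedes it below -/
import Mathlib

section
/- Let a, b be complex numbers with a ≠ b and a, b ∉ ℤ. Then Σ_{n=0}^∞ (−1)^n/((n+a)(n+b)) + Σ_{n=1}^∞ (−1)^n/((n−a)(n−b)) = (π/(b−a))·(1/sin(πa) − 1/sin(πb)). -/
open Complex Finset Real

/-- Generalized harmonic number `H_n^{(p)}` as a complex number. -/
noncomputable def gH (p n : ℕ) : ℂ := ∑ k ∈ Finset.range n, (1 : ℂ) / ((k : ℂ) + 1) ^ p

/-- Complex digamma function, defined via its series expansion. -/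
noncomputable def digammaC (a : ℂ) : ℂ :=
  -(Real.eulerMascheroniConstant : ℂ) + ∑' n : ℕ, ((1 : ℂ) / ((n : ℂ) + 1) - 1 / ((n : ℂ) + a))

/-- Polygamma function `ψ^{(j)}` of order `j` (with `ψ^{(0)} = ψ`). -/
noncomputable def polygammaC (j : ℕ) (a : ℂ) : ℂ :=
  if j = 0 then digammaC a
  else (-1 : ℂ) ^ (j + 1) * (Nat.factorial j) * ∑' k : ℕ, (1 : ℂ) / (a + (k : ℂ)) ^ (j + 1)

/-- Hurwitz zeta value `ζ(s; a)` at integer `s ≥ 1`, with the convention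
`ζ(1; a) = -(ψ(a) + γ)`. -/
noncomputable def hzeta (s : ℕ) (a : ℂ) : ℂ :=
  if s = 1 then -(digammaC a + (Real.eulerMascheroniConstant : ℂ))
  else ∑' n : ℕ, (1 : ℂ) / ((n : ℂ) + a) ^ s

/-- Riemann zeta value at a nonnegative integer, with the conventions
`ζ(0) = -1/2` and `ζ(1) = 0`. -/
noncomputable def zval (s : ℕ) : ℂ :=
  if s = 0 then -1/2 else if s = 1 then 0 else ∑' n : ℕ, (1 : ℂ) / ((n : ℂ) + 1) ^ s

/-- Alternating Riemann zeta value `ζ̄(s) = Σ_{n≥1} (-1)^{n-1}/n^s`, with the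
convention `ζ̄(0) = 1/2`. -/
noncomputable def azval (s : ℕ) : ℂ :=
  if s = 0 then 1/2 else ∑' n : ℕ, (-1 : ℂ) ^ n / ((n : ℂ) + 1) ^ s

/-- Alternating Hurwitz zeta value `ζ̄(s; a) = Σ_{n≥0} (-1)^n/(n+a)^s`. -/
noncomputable def ahzeta (s : ℕ) (a : ℂ) : ℂ :=
  ∑' n : ℕ, (-1 : ℂ) ^ n / ((n : ℂ) + a) ^ s

/-- Alternating double zeta value `ζ(overline{2j}, 2m+1)`. -/
noncomputable def altDoubleZeta (j m : ℕ) : ℂ :=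
  ∑' n : ℕ, (-1 : ℂ) ^ (n + 1) * gH (2 * m + 1) n / ((n : ℂ) + 1) ^ (2 * j)

/-!
Splitting both summands into partial fractions turns the left-hand side into
`(∑ₙ (cscTerm a n - cscTerm b n)) / (b - a)`, where `cscTerm x n` groups the terms `k = n` and
`k = -(n + 1)` of the Mittag-Leffler expansion `π / sin (π x) = ∑_{k ∈ ℤ} (-1)ᵏ / (x + k)`.
That expansion follows from Mathlib's cotangent series through
`π / sin (π x) = π cot (π x / 2) - π cot (π x)`: the even-indexed cotangent terms cancel.
-/

open Filter Topology

local notation "ℂ_ℤ" => Complex.integerComplement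

lemma cot_sub_cot_two_mul (u : ℂ) :
    Complex.cot u - Complex.cot (2 * u) = 1 / Complex.sin (2 * u) := by
  rw [Complex.cot_eq_cos_div_sin, Complex.cot_eq_cos_div_sin, Complex.sin_two_mul,
    Complex.cos_two_mul]
  rcases eq_or_ne (Complex.sin u) 0 with hs | hs
  · simp [hs]
  rcases eq_or_ne (Complex.cos u) 0 with hc | hc
  · simp [hc]
  field_simp
  ring

lemma cotTerm_div_two (x : ℂ) (k : ℕ) : cotTerm (x / 2) k = 2 * cotTerm x (2 * k + 1) := by
  simp only [cotTerm]
  push_cast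
  rw [show x / 2 - (k + 1) = (x - (2 * k + 1 + 1)) / 2 by ring,
    show x / 2 + (k + 1) = (x + (2 * k + 1 + 1)) / 2 by ring, one_div_div, one_div_div]
  ring

lemma hasSum_cotTerm {x : ℂ} (hx : x ∈ ℂ_ℤ) :
    HasSum (cotTerm x) (π * Complex.cot (π * x) - 1 / x) := by
  rw [cot_series_rep' hx]
  exact (summable_cotTerm hx).hasSum

lemma div_two_mem_integerComplement {x : ℂ} (hx : x ∈ ℂ_ℤ) : x / 2 ∈ ℂ_ℤ := by
  rintro ⟨k, hk⟩
  exact hx ⟨2 * k, by push_cast; rw [hk]; ring⟩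

lemma hasSum_neg_one_pow_mul_cotTerm {x : ℂ} (hx : x ∈ ℂ_ℤ) :
    HasSum (fun n => (-1) ^ (n + 1) * cotTerm x n) (π / Complex.sin (π * x) - 1 / x) := by
  set f : ℕ → ℂ := fun n => (-1) ^ (n + 1) * cotTerm x n + cotTerm x n with hf_def
  have heven : (fun k => f (2 * k)) = 0 := by
    ext k
    simp only [hf_def, Pi.zero_apply, pow_succ, pow_mul]
    ring
  have hodd : (fun k => f (2 * k + 1)) = cotTerm (x / 2) := by
    ext k
    simp only [hf_def, pow_succ, pow_mul, cotTerm_div_two]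
    ring
  have hf : HasSum f (0 + (π * Complex.cot (π * (x / 2)) - 1 / (x / 2))) :=
    HasSum.even_add_odd (heven ▸ hasSum_zero)
      (hodd ▸ hasSum_cotTerm (div_two_mem_integerComplement hx))
  have hsub := hf.sub (hasSum_cotTerm hx)
  simp only [hf_def, add_sub_cancel_right] at hsub
  have hcot := cot_sub_cot_two_mul (π * (x / 2))
  rw [show 2 * (π * (x / 2)) = π * x by ring] at hcot
  have hval : π / Complex.sin (π * x) - 1 / x
      = 0 + (π * Complex.cot (π * (x / 2)) - 1 / (x / 2)) - (π * Complex.cot (π * x) - 1 / x) := by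
    rw [div_eq_mul_one_div _ (Complex.sin _), ← hcot]
    ring
  rw [hval]
  exact hsub

lemma tendsto_neg_one_pow_div_natCast_add (x : ℂ) :
    Tendsto (fun n : ℕ => (-1 : ℂ) ^ n / (n + x)) atTop (𝓝 0) := by
  have h : Tendsto (fun n : ℕ => ((n : ℂ) + x)⁻¹) atTop (𝓝 0) :=
    tendsto_inv₀_cobounded.comp
      ((tendsto_add_const_cobounded x).comp tendsto_natCast_atTop_cobounded)
  rw [tendsto_zero_iff_norm_tendsto_zero] at h ⊢
  simpa [norm_div] using h

noncomputable def cscTerm (x : ℂ) (n : ℕ) : ℂ := (-1) ^ n * (1 / (n + x) + 1 / (n + 1 - x))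

lemma sum_range_cscTerm (x : ℂ) (N : ℕ) :
    ∑ n ∈ range N, cscTerm x n
      = ∑ n ∈ range N, (-1) ^ (n + 1) * cotTerm x n + (1 / x - (-1) ^ N / (N + x)) := by
  induction N with
  | zero => simp
  | succ N ih =>
    rw [sum_range_succ, sum_range_succ, ih]
    simp only [cscTerm, cotTerm]
    push_cast
    rw [show (N : ℂ) + 1 - x = -(x - (N + 1)) by ring, div_neg]
    ring

-- The series of `cscTerm x` converges only conditionally, and `HasSum` over `ℂ` means absolute
-- convergence: hence a statement about partial sums.
lemma tendsto_sum_range_cscTerm {x : ℂ} (hx : x ∈ ℂ_ℤ) :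
    Tendsto (fun N => ∑ n ∈ range N, cscTerm x n) atTop (𝓝 (π / Complex.sin (π * x))) := by
  simp_rw [sum_range_cscTerm]
  convert (hasSum_neg_one_pow_mul_cotTerm hx).tendsto_sum_nat.add
    ((tendsto_const_nhds (x := 1 / x)).sub (tendsto_neg_one_pow_div_natCast_add x)) using 2
  ring

lemma summable_one_div_natCast_add_mul_natCast_add (p q : ℂ) :
    Summable fun n : ℕ => 1 / ((n + p) * (n + q)) := by
  refine summable_of_isBigO_nat' (g := fun n : ℕ => ((n : ℂ) ^ 2)⁻¹) ?_ ?_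
  · exact .of_norm (by simp)
  · refine Asymptotics.isBigO_of_div_tendsto_nhds
      ((eventually_ne_atTop 0).mono fun n hn h => by simp_all) 1 ?_
    have := (tendsto_natCast_div_add_atTop p).mul (tendsto_natCast_div_add_atTop q)
    rw [one_mul] at this
    refine this.congr fun n => ?_
    simp only [Pi.div_apply, div_inv_eq_mul, one_div, mul_inv]
    ring

lemma neg_one_pow_div_add_neg_one_pow_div {a b : ℂ} (ha : a ∈ ℂ_ℤ) (hb : b ∈ ℂ_ℤ) (hab : a ≠ b)
    (n : ℕ) :
    (-1) ^ n / ((n + a) * (n + b)) + (-1) ^ (n + 1) / ((n + 1 - a) * (n + 1 - b))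
      = (cscTerm a n - cscTerm b n) / (b - a) := by
  have h₁ : ∀ {x : ℂ}, x ∈ ℂ_ℤ → (n : ℂ) + x ≠ 0 := fun hx => by
    simpa [add_comm] using integerComplement_add_ne_zero hx n
  have h₂ : ∀ {x : ℂ}, x ∈ ℂ_ℤ → (n : ℂ) + 1 - x ≠ 0 := fun hx h =>
    integerComplement_add_ne_zero hx (-(n + 1)) (by push_cast; linear_combination -h)
  have := h₁ ha
  have := h₁ hb
  have := h₂ ha
  have := h₂ hb
  have : b - a ≠ 0 := sub_ne_zero.mpr hab.symm
  simp only [cscTerm]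
  field_simp
  ring

/-- Partial fraction identity for the alternating series. -/
theorem alt_partial_fraction (a b : ℂ) (hab : a ≠ b)
    (ha : ∀ k : ℤ, a ≠ (k : ℂ)) (hb : ∀ k : ℤ, b ≠ (k : ℂ)) :
    (∑' n : ℕ, (-1 : ℂ) ^ n / (((n : ℂ) + a) * ((n : ℂ) + b)))
      + (∑' n : ℕ, (-1 : ℂ) ^ (n + 1) / (((n : ℂ) + 1 - a) * ((n : ℂ) + 1 - b)))
    = (Real.pi : ℂ) / (b - a) *
        (1 / Complex.sin ((Real.pi : ℂ) * a) - 1 / Complex.sin ((Real.pi : ℂ) * b)) := by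
  have ha' : a ∈ ℂ_ℤ := fun ⟨k, hk⟩ => ha k hk.symm
  have hb' : b ∈ ℂ_ℤ := fun ⟨k, hk⟩ => hb k hk.symm
  have hS₁ : Summable fun n : ℕ => (-1 : ℂ) ^ n / ((n + a) * (n + b)) := by
    simpa only [div_eq_mul_one_div ((-1 : ℂ) ^ _)] using
      (summable_one_div_natCast_add_mul_natCast_add a b).alternating
  have hS₂ : Summable fun n : ℕ => (-1 : ℂ) ^ (n + 1) / ((n + 1 - a) * (n + 1 - b)) := by
    refine (summable_one_div_natCast_add_mul_natCast_add (1 - a) (1 - b)).alternating.neg.congr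
      fun n => ?_
    ring
  rw [← hS₁.tsum_add hS₂]
  refine ((hS₁.add hS₂).hasSum_iff_tendsto_nat.mpr ?_).tsum_eq
  simp_rw [neg_one_pow_div_add_neg_one_pow_div ha' hb' hab, ← sum_div, sum_sub_distrib]
  convert ((tendsto_sum_range_cscTerm ha').sub (tendsto_sum_range_cscTerm hb')).div_const (b - a)
    using 2
  ring
end

section
/- Let m be a nonnegative integer and let a be a complex number with 0 < |a| < 1. Then Σ_{n=1}^∞ (−1)^n H_{n−1}^{(2m+1)}/(n²−a²) = Σ_{j=1}^∞ ζ(‾2j, 2m+1)·a^{2j−2}, i.e., the left-hand side is the sum of the convergent power series in a with coefficients ζ(‾2j, 2m+1) at a^{2j−2}. -/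
open Complex Finset Real

/-! Expanding `1 / ((n+1)² - a²) = Σ_j a^{2j} / (n+1)^{2j+2}` turns the series over `n` into
a double series over `(j, n)`. Since `|H_n^{(p)}| ≤ H_n ≤ 1 + log n = O(√n)`, the double series
is dominated by `Σ_j |a|^{2j} · Σ_n n^{-3/2}`, so it converges absolutely and the order of
summation can be exchanged. -/

section GeometricExpansion

variable {K : Type*} [NormedField K]

theorem hasSum_pow_div_pow_succ {w u : K} (hwu : ‖w‖ < ‖u‖) :
    HasSum (fun j : ℕ => w ^ j / u ^ (j + 1)) (u - w)⁻¹ := by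
  have hu : u ≠ 0 := norm_pos_iff.1 ((norm_nonneg w).trans_lt hwu)
  have hq : ‖w / u‖ < 1 := by rwa [norm_div, div_lt_one (hwu.trans_le' (norm_nonneg w))]
  convert (hasSum_geometric_of_norm_lt_one hq).div_const u using 1
  · ext j; rw [div_pow, pow_succ, div_div]
  · field_simp [sub_ne_zero.2 (fun h : u = w => hwu.ne (by rw [h]))]

theorem hasSum_tsum_div_pow_succ_mul_pow [CompleteSpace K] {c u : ℕ → K} {w : K}
    (hc : Summable fun n => ‖c n‖ / ‖u n‖) (hu : ∀ n, 1 ≤ ‖u n‖) (hw : ‖w‖ < 1) :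
    HasSum (fun j => (∑' n, c n / u n ^ (j + 1)) * w ^ j) (∑' n, c n / (u n - w)) := by
  set f : ℕ × ℕ → K := fun p => c p.2 * (w ^ p.1 / u p.2 ^ (p.1 + 1))
  have hf_le (p : ℕ × ℕ) : ‖f p‖ ≤ ‖w‖ ^ p.1 * (‖c p.2‖ / ‖u p.2‖) := by
    obtain ⟨j, n⟩ := p
    have hu0 : 0 < ‖u n‖ := one_pos.trans_le (hu n)
    calc ‖f (j, n)‖ = ‖w‖ ^ j / ‖u n‖ ^ j * (‖c n‖ / ‖u n‖) := by
          simp only [f, norm_mul, norm_div, norm_pow, pow_succ]; ring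
      _ ≤ ‖w‖ ^ j * (‖c n‖ / ‖u n‖) := by
          gcongr; exact div_le_self (by positivity) (one_le_pow₀ (hu n))
  have hf : Summable f := Summable.of_norm_bounded
    ((summable_geometric_of_lt_one (norm_nonneg w) hw).mul_of_nonneg hc
      (fun _ => by positivity) (fun _ => by positivity)) hf_le
  have hrow : ∀ j, HasSum (fun n => f (j, n)) ((∑' n, c n / u n ^ (j + 1)) * w ^ j) := by
    intro j
    have hterm : (fun n => f (j, n)) = fun n => c n / u n ^ (j + 1) * w ^ j :=
      funext fun n => by simp only [f]; ring
    rw [← tsum_mul_right, ← hterm]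
    exact (hf.prod_factor j).hasSum
  have hcol : ∀ n, HasSum (fun j => f (j, n)) (c n / (u n - w)) := fun n => by
    rw [div_eq_mul_inv]
    exact (hasSum_pow_div_pow_succ (hw.trans_le (hu n))).mul_left (c n)
  have hcols := ((Equiv.prodComm ℕ ℕ).hasSum_iff.2 hf.hasSum).prod_fiberwise hcol
  rw [hcols.tsum_eq]
  exact hf.hasSum.prod_fiberwise hrow

end GeometricExpansion

theorem norm_gH_le_harmonic {p : ℕ} (hp : 1 ≤ p) (n : ℕ) : ‖gH p n‖ ≤ harmonic n := by
  simp only [gH, harmonic]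
  push_cast
  refine (norm_sum_le _ _).trans (Finset.sum_le_sum fun k _ => ?_)
  have hk : (1 : ℝ) ≤ k + 1 := by simp
  rw [norm_div, norm_one, norm_pow, ← one_div, ← Nat.cast_succ, Complex.norm_natCast,
    Nat.cast_succ]
  exact one_div_le_one_div_of_le (by positivity)
    (le_self_pow₀ hk (Nat.one_le_iff_ne_zero.mp hp))

theorem harmonic_le_three_mul_rpow (n : ℕ) :
    (harmonic n : ℝ) ≤ 3 * ((n : ℝ) + 1) ^ (1 / 2 : ℝ) := by
  have hmono : (n : ℝ) ^ (1 / 2 : ℝ) ≤ ((n : ℝ) + 1) ^ (1 / 2 : ℝ) :=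
    Real.rpow_le_rpow n.cast_nonneg (by linarith) (by norm_num)
  have hone : 1 ≤ ((n : ℝ) + 1) ^ (1 / 2 : ℝ) :=
    Real.one_le_rpow (by linarith [n.cast_nonneg (α := ℝ)]) (by norm_num)
  calc (harmonic n : ℝ) ≤ 1 + Real.log n := harmonic_le_one_add_log n
    _ ≤ 1 + (n : ℝ) ^ (1 / 2 : ℝ) / (1 / 2) := by
        gcongr; exact Real.log_natCast_le_rpow_div n (by norm_num)
    _ ≤ 3 * ((n : ℝ) + 1) ^ (1 / 2 : ℝ) := by linarith

theorem summable_norm_gH_div_sq {p : ℕ} (hp : 1 ≤ p) :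
    Summable fun n : ℕ => ‖gH p n‖ / ((n : ℝ) + 1) ^ 2 := by
  have hs : Summable fun n : ℕ => ((n : ℝ) + 1) ^ (-(3 / 2) : ℝ) := by
    simpa using (summable_nat_add_iff 1).2
      (Real.summable_nat_rpow.2 (by norm_num : -(3 / 2 : ℝ) < -1))
  refine Summable.of_nonneg_of_le (fun n => by positivity) (fun n => ?_) (hs.mul_left 3)
  have hpos : (0 : ℝ) < n + 1 := by positivity
  have hsplit :
      ((n : ℝ) + 1) ^ 2 = ((n : ℝ) + 1) ^ (1 / 2 : ℝ) * ((n : ℝ) + 1) ^ (3 / 2 : ℝ) := by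
    rw [← Real.rpow_add hpos, ← Real.rpow_natCast]; norm_num
  rw [Real.rpow_neg hpos.le, hsplit, ← div_div,
    div_eq_mul_inv _ (((n : ℝ) + 1) ^ (3 / 2 : ℝ))]
  gcongr
  rw [div_le_iff₀ (by positivity)]
  exact (norm_gH_le_harmonic hp n).trans (harmonic_le_three_mul_rpow n)

theorem alt_double_zeta_generating_general (m : ℕ) (a : ℂ)
    (ha1 : ‖a‖ < 1) :
    HasSum (fun j : ℕ => altDoubleZeta (j + 1) m * a ^ (2 * j))
      (∑' n : ℕ, (-1 : ℂ) ^ (n + 1) * gH (2 * m + 1) n / (((n : ℂ) + 1) ^ 2 - a ^ 2)) := by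
  have hnorm : ∀ n : ℕ, ‖((n : ℂ) + 1) ^ 2‖ = ((n : ℝ) + 1) ^ 2 := fun n => by
    rw [norm_pow, ← Nat.cast_succ, Complex.norm_natCast, Nat.cast_succ]
  have hc : Summable fun n : ℕ =>
      ‖(-1 : ℂ) ^ (n + 1) * gH (2 * m + 1) n‖ / ‖((n : ℂ) + 1) ^ 2‖ := by
    simpa only [hnorm, norm_mul, norm_pow, norm_neg, norm_one, one_pow, one_mul]
      using summable_norm_gH_div_sq (p := 2 * m + 1) (by omega)
  have hu : ∀ n : ℕ, 1 ≤ ‖((n : ℂ) + 1) ^ 2‖ := fun n => by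
    rw [hnorm]; exact one_le_pow₀ (by simp)
  have hw : ‖a ^ 2‖ < 1 := by
    rw [norm_pow]; exact pow_lt_one₀ (norm_nonneg a) ha1 two_ne_zero
  simpa only [altDoubleZeta, ← pow_mul] using hasSum_tsum_div_pow_succ_mul_pow hc hu hw

/-- Power series expansion with alternating double zeta values as coefficients. -/
theorem alt_double_zeta_generating (m : ℕ) (a : ℂ)
    (ha : 0 < ‖a‖) (ha1 : ‖a‖ < 1) :
    HasSum (fun j : ℕ => altDoubleZeta (j + 1) m * a ^ (2 * j))
      (∑' n : ℕ, (-1 : ℂ) ^ (n + 1) * gH (2 * m + 1) n / (((n : ℂ) + 1) ^ 2 - a ^ 2)) :=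
  alt_double_zeta_generating_general m a ha1
end

section
/- Let m be a nonnegative integer and let a be a complex number with 0 < |a| < 1. Then Σ_{n=1}^∞ (−1)^n/(n^{2m+1}(n²−a²)) = −Σ_{j=1}^∞ ζ̄(2m+2j+1)·a^{2j−2}, i.e., the left-hand side is the sum of the convergent power series in a with coefficients −ζ̄(2m+2j+1) at a^{2j−2}. -/
open Complex Finset Real

/-!
Expanding `1 / ((n+1)^2 - a^2)` as a geometric series in `a^2 / (n+1)^2` writes the left-hand
side as a double series over `(n, j)` which, for `‖a‖ < 1`, is dominated by
`‖a‖^(2j) / (n+1)^2` and hence absolutely summable. Summing it in the other order, over `n`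
first, produces the alternating zeta values.
-/

theorem Summable.hasSum_comm_of_hasSum {α β γ : Type*} [AddCommMonoid α] [TopologicalSpace α]
    [ContinuousAdd α] [T3Space α] {f : β → γ → α} {g : β → α} {h : γ → α}
    (hf : Summable (Function.uncurry f)) (hrow : ∀ b, HasSum (f b) (g b))
    (hcol : ∀ c, HasSum (fun b => f b c) (h c)) :
    HasSum h (∑' b, g b) := by
  have hg : HasSum g (∑' p, Function.uncurry f p) := hf.hasSum.prod_fiberwise hrow
  have hswap : HasSum (Function.uncurry f ∘ Prod.swap) (∑' p, Function.uncurry f p) :=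
    (Equiv.prodComm γ β).hasSum_iff.mpr hf.hasSum
  rw [hg.tsum_eq]
  exact hswap.prod_fiberwise hcol

lemma norm_natCast_add_one (n : ℕ) : ‖(n : ℂ) + 1‖ = n + 1 := by
  exact_mod_cast Complex.norm_natCast (n + 1)

lemma summable_one_div_natCast_add_one_pow {s : ℕ} (hs : 2 ≤ s) :
    Summable (fun n : ℕ => 1 / ((n : ℝ) + 1) ^ s) := by
  simpa using (summable_nat_add_iff 1).mpr (Real.summable_one_div_nat_pow.mpr hs)

lemma hasSum_azval {s : ℕ} (hs : 2 ≤ s) :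
    HasSum (fun n : ℕ => (-1 : ℂ) ^ n / ((n : ℂ) + 1) ^ s) (azval s) := by
  rw [azval, if_neg (by omega)]
  refine (Summable.of_norm_bounded (summable_one_div_natCast_add_one_pow hs) fun n => ?_).hasSum
  simp [norm_natCast_add_one]

lemma hasSum_pow_div_pow_of_norm_lt {a z : ℂ} (haz : ‖a‖ < ‖z‖) (k : ℕ) :
    HasSum (fun j : ℕ => a ^ (2 * j) / z ^ (k + 2 * j + 2)) (1 / (z ^ k * (z ^ 2 - a ^ 2))) := by
  have hz : z ≠ 0 := norm_pos_iff.mp ((norm_nonneg a).trans_lt haz)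
  have hza : z ^ 2 - a ^ 2 ≠ 0 := by
    intro h
    have : ‖a‖ ^ 2 = ‖z‖ ^ 2 := by rw [← norm_pow, ← norm_pow, sub_eq_zero.mp h]
    nlinarith [norm_nonneg a]
  have hr : ‖a ^ 2 / z ^ 2‖ < 1 := by
    rw [norm_div, norm_pow, norm_pow, div_lt_one (by positivity)]
    gcongr
  have hterm : ∀ j : ℕ, a ^ (2 * j) / z ^ (k + 2 * j + 2) = 1 / z ^ (k + 2) * (a ^ 2 / z ^ 2) ^ j := by
    intro j
    rw [div_pow, ← pow_mul, ← pow_mul, show k + 2 * j + 2 = k + 2 + 2 * j by ring, pow_add]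
    field_simp
  have hsum : 1 / (z ^ k * (z ^ 2 - a ^ 2)) = 1 / z ^ (k + 2) * (1 - a ^ 2 / z ^ 2)⁻¹ := by
    rw [one_sub_div (pow_ne_zero 2 hz), inv_div, pow_add]
    field_simp
  simpa only [hterm, hsum] using (hasSum_geometric_of_norm_lt_one hr).mul_left (1 / z ^ (k + 2))

lemma summable_uncurry_neg_one_pow_mul_pow_div (k : ℕ) {a : ℂ} (ha : ‖a‖ < 1) :
    Summable (Function.uncurry fun n j : ℕ =>
      (-1 : ℂ) ^ (n + 1) * (a ^ (2 * j) / ((n : ℂ) + 1) ^ (k + 2 * j + 2))) := by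
  have hgeom : Summable (fun j : ℕ => (‖a‖ ^ 2) ^ j) :=
    summable_geometric_of_lt_one (by positivity) (by nlinarith [norm_nonneg a])
  refine Summable.of_norm_bounded
    ((summable_one_div_natCast_add_one_pow le_rfl).mul_of_nonneg hgeom
      (fun n => by positivity) (fun j => by positivity)) fun ⟨n, j⟩ => ?_
  calc ‖(-1 : ℂ) ^ (n + 1) * (a ^ (2 * j) / ((n : ℂ) + 1) ^ (k + 2 * j + 2))‖
      = ‖a‖ ^ (2 * j) / ((n : ℝ) + 1) ^ (k + 2 * j + 2) := by simp [norm_natCast_add_one]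
    _ ≤ ‖a‖ ^ (2 * j) / ((n : ℝ) + 1) ^ 2 := by
        gcongr
        exacts [le_add_of_nonneg_left n.cast_nonneg, by omega]
    _ = 1 / ((n : ℝ) + 1) ^ 2 * (‖a‖ ^ 2) ^ j := by rw [← pow_mul]; ring

theorem hasSum_neg_azval_mul_pow (k : ℕ) {a : ℂ} (ha : ‖a‖ < 1) :
    HasSum (fun j : ℕ => -azval (k + 2 * j + 2) * a ^ (2 * j))
      (∑' n : ℕ, (-1 : ℂ) ^ (n + 1) / (((n : ℂ) + 1) ^ k * (((n : ℂ) + 1) ^ 2 - a ^ 2))) := by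
  refine (summable_uncurry_neg_one_pow_mul_pow_div k ha).hasSum_comm_of_hasSum
    (fun n => ?_) (fun j => ?_)
  · have haz : ‖a‖ < ‖(n : ℂ) + 1‖ := by
      rw [norm_natCast_add_one]; linarith [n.cast_nonneg (α := ℝ)]
    simpa only [mul_one_div] using (hasSum_pow_div_pow_of_norm_lt haz k).mul_left ((-1) ^ (n + 1))
  · exact ((hasSum_azval (s := k + 2 * j + 2) (by omega)).neg.mul_right (a ^ (2 * j))).congr_fun
      fun n => by ring

theorem alt_zeta_generating_general (m : ℕ) (a : ℂ)
    (ha1 : ‖a‖ < 1) :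
    HasSum (fun j : ℕ => -azval (2 * m + 2 * j + 3) * a ^ (2 * j))
      (∑' n : ℕ,
        (-1 : ℂ) ^ (n + 1) / (((n : ℂ) + 1) ^ (2 * m + 1) * (((n : ℂ) + 1) ^ 2 - a ^ 2))) := by
  simpa only [show ∀ j, 2 * m + 1 + 2 * j + 2 = 2 * m + 2 * j + 3 by omega]
    using hasSum_neg_azval_mul_pow (2 * m + 1) ha1

/-- Power series expansion with alternating zeta values as coefficients. -/
theorem alt_zeta_generating (m : ℕ) (a : ℂ)
    (ha : 0 < ‖a‖) (ha1 : ‖a‖ < 1) :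
    HasSum (fun j : ℕ => -azval (2 * m + 2 * j + 3) * a ^ (2 * j))
      (∑' n : ℕ,
        (-1 : ℂ) ^ (n + 1) / (((n : ℂ) + 1) ^ (2 * m + 1) * (((n : ℂ) + 1) ^ 2 - a ^ 2))) :=
  alt_zeta_generating_general m a ha1
end

section
/- Let q be a positive integer and let a be a complex number with 0 < |a| < 1. Then ζ̄(2q; −a) − ζ̄(2q; a) = −2 Σ_{j=1}^∞ C(2j+2q−2, 2j−1)·ζ̄(2q+2j−1)·a^{2j−1}, i.e., the left-hand side is the sum of the convergent power series in a with coefficients −2·C(2j+2q−2, 2j−1)·ζ̄(2q+2j−1) at a^{2j−1}, where C(·,·) denotes binomial coefficients. -/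
open Complex Finset Real

/-! Expanding binomially in `a`, the even powers cancel in `1/(m+1-a)^(2q) - 1/(m+1+a)^(2q)`, which
leaves `2 ∑ⱼ C(2j+2q, 2j+1) a^(2j+1) / (m+1)^(2q+2j+1)`. Weighted by `(-1)^(m+1)` this gives a
double series dominated by `(∑ⱼ 2 C(2j+2q, 2j+1) ‖a‖^(2j+1)) (∑ₘ 1/(m+1)²)`, hence absolutely
convergent for `‖a‖ < 1`. Summed over `j` first it is `ζ̄(2q; -a) - ζ̄(2q; a)` (the `n = 0` terms
cancel as `2q` is even); summed over `m` first it is the claimed series. -/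

open Filter

theorem Summable.hasSum_fiberwise_of_swap {α β γ : Type*} [AddCommMonoid α] [TopologicalSpace α]
    [ContinuousAdd α] [T3Space α] {F : β × γ → α} {f : β → α} {g : γ → α} {s : α}
    (hF : Summable F) (hf : ∀ b, HasSum (fun c => F (b, c)) (f b))
    (hg : ∀ c, HasSum (fun b => F (b, c)) (g c)) (hs : HasSum g s) : HasSum f s := by
  have hswap : HasSum g (∑' p, F p) := by
    rw [← (Equiv.prodComm γ β).tsum_eq]
    exact ((Equiv.prodComm γ β).summable_iff.2 hF).hasSum.prod_fiberwise hg
  exact hs.unique hswap ▸ hF.hasSum.prod_fiberwise hf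

section OddBinomialSeries

variable {𝕜 : Type*} [NormedField 𝕜]

theorem hasSum_two_mul_choose_mul_odd_pow (k : ℕ) {r : 𝕜} (hr : ‖r‖ < 1) :
    HasSum (fun j : ℕ => 2 * ((2 * j + k).choose (2 * j + 1) : 𝕜) * r ^ (2 * j + 1))
      (1 / (1 - r) ^ k - 1 / (1 + r) ^ k) := by
  cases k with
  | zero => simp
  | succ k =>
    have hdiff := (hasSum_choose_mul_geometric_of_norm_lt_one k hr).sub
      (hasSum_choose_mul_geometric_of_norm_lt_one k (r := -r) (by rwa [norm_neg]))
    have hodd : Function.Injective fun j : ℕ => 2 * j + 1 := fun i j h => by simp_all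
    have heven : ∀ n ∉ Set.range fun j : ℕ => 2 * j + 1,
        ((n + k).choose k : 𝕜) * r ^ n - ((n + k).choose k : 𝕜) * (-r) ^ n = 0 := by
      intro n hn
      have : Even n := by
        rcases Nat.even_or_odd n with h | ⟨j, rfl⟩
        · exact h
        · exact absurd ⟨j, rfl⟩ hn
      rw [this.neg_pow, sub_self]
    convert (hodd.hasSum_iff heven).2 hdiff using 1
    · funext j
      have hchoose : (2 * j + (k + 1)).choose (2 * j + 1) = (2 * j + 1 + k).choose k := by
        rw [show 2 * j + (k + 1) = 2 * j + 1 + k by ring, Nat.choose_symm_add]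
      simp only [Function.comp_apply, hchoose, (odd_two_mul_add_one j).neg_pow]
      ring
    · rw [sub_neg_eq_add]

theorem hasSum_one_div_sub_pow_sub_one_div_add_pow (k : ℕ) {x a : 𝕜} (ha : ‖a‖ < ‖x‖) :
    HasSum (fun j : ℕ => 2 * ((2 * j + k).choose (2 * j + 1) : 𝕜) * a ^ (2 * j + 1) /
        x ^ (k + 2 * j + 1))
      (1 / (x - a) ^ k - 1 / (x + a) ^ k) := by
  have hx : x ≠ 0 := norm_pos_iff.1 ((norm_nonneg a).trans_lt ha)
  have hxa : x - a ≠ 0 := fun h => by simp [sub_eq_zero.1 h] at ha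
  have hxa' : x + a ≠ 0 := fun h => by simp [eq_neg_of_add_eq_zero_right h] at ha
  have hr : ‖a / x‖ < 1 := by rwa [norm_div, div_lt_one (norm_pos_iff.2 hx)]
  convert (hasSum_two_mul_choose_mul_odd_pow k hr).div_const (x ^ k) using 1
  · funext j
    rw [div_pow]
    field_simp
    ring
  · rw [one_sub_div hx, one_add_div hx, div_pow, div_pow]
    field_simp

end OddBinomialSeries

theorem summable_norm_one_div_natCast_add_pow (b : ℂ) {s : ℕ} (hs : 1 < s) :
    Summable fun n : ℕ => ‖1 / ((n : ℂ) + b) ^ s‖ := by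
  refine .of_norm_bounded_eventually_nat
    (((Real.summable_one_div_nat_pow).2 hs).mul_left (2 ^ s)) ?_
  filter_upwards [eventually_ge_atTop ⌈2 * ‖b‖⌉₊, eventually_ge_atTop 1] with n hnb hn1
  have hn : (0 : ℝ) < n := by exact_mod_cast hn1
  have hb : 2 * ‖b‖ ≤ n := Nat.ceil_le.1 hnb
  have hnorm : (n : ℝ) / 2 ≤ ‖(n : ℂ) + b‖ := by
    have := norm_sub_norm_le (n : ℂ) (-b)
    rw [sub_neg_eq_add, norm_neg, Complex.norm_natCast] at this
    linarith
  rw [norm_norm, norm_div, norm_one, norm_pow, mul_one_div, ← div_pow, one_div, ← inv_pow,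
    ← inv_div]
  exact pow_le_pow_left₀ (by positivity) (inv_anti₀ (by positivity) hnorm) s

theorem hasSum_ahzeta (b : ℂ) {s : ℕ} (hs : 1 < s) :
    HasSum (fun n : ℕ => (-1 : ℂ) ^ n / ((n : ℂ) + b) ^ s) (ahzeta s b) :=
  (Summable.of_norm_bounded (summable_norm_one_div_natCast_add_pow b hs) fun n => by simp).hasSum

theorem azval_eq_ahzeta_one {s : ℕ} (hs : s ≠ 0) : azval s = ahzeta s 1 := by
  simp [azval, ahzeta, hs]

theorem hasSum_ahzeta_neg_sub_ahzeta {k : ℕ} (hk : Even k) (hk1 : 1 < k) (a : ℂ) :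
    HasSum (fun m : ℕ => (-1 : ℂ) ^ (m + 1) * (1 / ((m : ℂ) + 1 - a) ^ k - 1 / ((m : ℂ) + 1 + a) ^ k))
      (ahzeta k (-a) - ahzeta k a) := by
  have h := (hasSum_nat_add_iff' 1).2 ((hasSum_ahzeta (-a) hk1).sub (hasSum_ahzeta a hk1))
  rw [sum_range_one, Nat.cast_zero, zero_add, zero_add, hk.neg_pow, sub_self, sub_zero] at h
  refine h.congr_fun fun m => ?_
  push_cast
  ring

noncomputable def ahzetaAntisymTerm (k : ℕ) (a : ℂ) (p : ℕ × ℕ) : ℂ :=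
  (-1) ^ (p.2 + 1) * (2 * ((2 * p.1 + k).choose (2 * p.1 + 1) : ℂ) * a ^ (2 * p.1 + 1) /
    ((p.2 : ℂ) + 1) ^ (k + 2 * p.1 + 1))

theorem hasSum_ahzetaAntisymTerm_col (k : ℕ) {a : ℂ} (ha : ‖a‖ < 1) (m : ℕ) :
    HasSum (fun j => ahzetaAntisymTerm k a (j, m))
      ((-1 : ℂ) ^ (m + 1) * (1 / ((m : ℂ) + 1 - a) ^ k - 1 / ((m : ℂ) + 1 + a) ^ k)) := by
  have hm : ‖a‖ < ‖(m : ℂ) + 1‖ := by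
    rw [← Nat.cast_add_one, Complex.norm_natCast]
    exact ha.trans_le (by simp)
  simpa only [ahzetaAntisymTerm] using
    (hasSum_one_div_sub_pow_sub_one_div_add_pow k hm).mul_left ((-1 : ℂ) ^ (m + 1))

theorem hasSum_ahzetaAntisymTerm_row {k : ℕ} (hk : 0 < k) (a : ℂ) (j : ℕ) :
    HasSum (fun m => ahzetaAntisymTerm k a (j, m))
      (-2 * ((2 * j + k).choose (2 * j + 1) : ℂ) * azval (k + 2 * j + 1) * a ^ (2 * j + 1)) := by
  have h := (hasSum_ahzeta 1 (by omega : 1 < k + 2 * j + 1)).mul_left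
    (-(2 * ((2 * j + k).choose (2 * j + 1) : ℂ) * a ^ (2 * j + 1)))
  rw [azval_eq_ahzeta_one (by omega), mul_right_comm _ (ahzeta _ _), neg_mul, neg_mul]
  refine h.congr_fun fun m => ?_
  simp only [ahzetaAntisymTerm]
  ring

theorem summable_ahzetaAntisymTerm {k : ℕ} (hk : 0 < k) {a : ℂ} (ha : ‖a‖ < 1) :
    Summable (ahzetaAntisymTerm k a) := by
  have hrow : Summable fun j : ℕ => 2 * ((2 * j + k).choose (2 * j + 1) : ℝ) * ‖a‖ ^ (2 * j + 1) :=
    (hasSum_two_mul_choose_mul_odd_pow k (r := ‖a‖) (by simpa)).summable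
  refine .of_norm_bounded ((hrow.mul_of_nonneg
    (summable_norm_one_div_natCast_add_pow 1 one_lt_two) (fun _ => by positivity)
    (fun _ => norm_nonneg _))) fun p => ?_
  have hm : 1 ≤ ‖(p.2 : ℂ) + 1‖ := by
    rw [← Nat.cast_add_one, Complex.norm_natCast]
    simp
  simp only [ahzetaAntisymTerm, norm_mul, norm_div, norm_pow, norm_neg, norm_one, one_pow,
    one_mul, Complex.norm_natCast, Complex.norm_ofNat, mul_one_div]
  gcongr
  omega

theorem alt_hurwitz_zeta_antisym_expansion_general (q : ℕ) (hq : 0 < q) (a : ℂ)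
    (ha1 : ‖a‖ < 1) :
    HasSum
      (fun j : ℕ =>
        -2 * (Nat.choose (2 * j + 2 * q) (2 * j + 1) : ℂ) *
          azval (2 * q + 2 * j + 1) * a ^ (2 * j + 1))
      (ahzeta (2 * q) (-a) - ahzeta (2 * q) a) :=
  (summable_ahzetaAntisymTerm (by omega) ha1).hasSum_fiberwise_of_swap
    (hasSum_ahzetaAntisymTerm_row (by omega) a) (hasSum_ahzetaAntisymTerm_col (2 * q) ha1)
    (hasSum_ahzeta_neg_sub_ahzeta (even_two_mul q) (by omega) a)

/-- Power series expansion of the antisymmetrized alternating Hurwitz zeta function. -/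
theorem alt_hurwitz_zeta_antisym_expansion (q : ℕ) (hq : 0 < q) (a : ℂ)
    (ha : 0 < ‖a‖) (ha1 : ‖a‖ < 1) :
    HasSum
      (fun j : ℕ =>
        -2 * (Nat.choose (2 * j + 2 * q) (2 * j + 1) : ℂ) *
          azval (2 * q + 2 * j + 1) * a ^ (2 * j + 1))
      (ahzeta (2 * q) (-a) - ahzeta (2 * q) a) :=
  alt_hurwitz_zeta_antisym_expansion_general q hq a ha1
end
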